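/- arXiv:2510.25949 — 2 statements merged into one kernel-verified Lean document; each statement's English description precedes it below -/
import Mathlib

section
/- Let (X,d) be a metric space and f_1, …, f_N : X → X contractions with ratios λ_i ∈ (0,1) and fixed points a_1, …, a_N. Set λ = max_i λ_i, D_i = Σ_{j=1}^N d(a_i, a_j), D = max_i D_i, and M = ((1+λ)/(1−λ)) D. Then the multi-foci ellipse B = { x ∈ X : Σ_{j=1}^N d(x, a_j) ≤ M } satisfies f_i(B) ⊆ B for every i = 1, …, N. -/
theorem stmt_2 {X : Type*} [MetricSpace X] {N : ℕ}
    (f : Fin N → X → X) (lam : Fin N → ℝ) (a : Fin N → X)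
    (hlam : ∀ i, lam i ∈ Set.Ioo (0 : ℝ) 1)
    (hf : ∀ i x y, dist (f i x) (f i y) ≤ lam i * dist x y)
    (hfix : ∀ i, f i (a i) = a i)
    (hne : (Finset.univ : Finset (Fin N)).Nonempty)
    (L D M : ℝ)
    (hL : L = Finset.univ.sup' hne lam)
    (hD : D = Finset.univ.sup' hne (fun i => ∑ j, dist (a i) (a j)))
    (hM : M = (1 + L) / (1 - L) * D) :
    ∀ i, Set.MapsTo (f i) {x | ∑ j, dist x (a j) ≤ M} {x | ∑ j, dist x (a j) ≤ M} := by
  intro i x hx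
  simp only [Set.mem_setOf_eq] at hx ⊢
  obtain ⟨i₀, _⟩ := id hne
  have hLlt : L < 1 := by
    rw [hL, Finset.sup'_lt_iff]
    exact fun j _ => (hlam j).2
  have hLpos : 0 < L := by
    have h := Finset.le_sup' lam (Finset.mem_univ i₀)
    rw [← hL] at h
    exact lt_of_lt_of_le (hlam i₀).1 h
  have hlamL : lam i ≤ L := by
    have h := Finset.le_sup' lam (Finset.mem_univ i)
    rw [← hL] at h; exact h
  have hDi : (∑ j, dist (a i) (a j)) ≤ D := by
    have h := Finset.le_sup' (fun i => ∑ j, dist (a i) (a j)) (Finset.mem_univ i)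
    rw [← hD] at h; exact h
  have hDnn : 0 ≤ D := le_trans (Finset.sum_nonneg fun j _ => dist_nonneg) hDi
  have hSnn : 0 ≤ ∑ j, dist x (a j) := Finset.sum_nonneg fun j _ => dist_nonneg
  have hMnn : 0 ≤ M := by
    rw [hM]
    apply mul_nonneg (div_nonneg (by linarith) (by linarith)) hDnn
  have key : ∀ j, dist (f i x) (a j) ≤ lam i * dist x (a j) + (1 + lam i) * dist (a i) (a j) := by
    intro j
    have h1 : dist (f i x) (a j) ≤ dist (f i x) (a i) + dist (a i) (a j) := dist_triangle _ _ _
    have h2 : dist (f i x) (a i) ≤ lam i * dist x (a i) := by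
      conv_lhs => rw [← hfix i]
      exact hf i x (a i)
    have h3 : dist x (a i) ≤ dist x (a j) + dist (a j) (a i) := dist_triangle _ _ _
    have h4 : lam i * dist x (a i) ≤ lam i * (dist x (a j) + dist (a j) (a i)) :=
      mul_le_mul_of_nonneg_left h3 (le_of_lt (hlam i).1)
    have h5 : dist (a j) (a i) = dist (a i) (a j) := dist_comm _ _
    nlinarith [dist_nonneg (x := a i) (y := a j), (hlam i).1]
  calc ∑ j, dist (f i x) (a j)
      ≤ ∑ j, (lam i * dist x (a j) + (1 + lam i) * dist (a i) (a j)) :=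
        Finset.sum_le_sum fun j _ => key j
    _ = lam i * (∑ j, dist x (a j)) + (1 + lam i) * (∑ j, dist (a i) (a j)) := by
        rw [Finset.sum_add_distrib, Finset.mul_sum, Finset.mul_sum]
    _ ≤ L * M + (1 + L) * D := by
        have h1 : lam i * (∑ j, dist x (a j)) ≤ L * M := mul_le_mul hlamL hx hSnn hLpos.le
        have h2 : (1 + lam i) * (∑ j, dist (a i) (a j)) ≤ (1 + L) * D :=
          mul_le_mul (by linarith) hDi (Finset.sum_nonneg fun j _ => dist_nonneg) (by linarith)
        linarith
    _ = M := by
        have h1L : (1 : ℝ) - L ≠ 0 := by linarith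
        rw [hM]; field_simp; ring
end

section
/- Let (X,d) be a nonempty complete proper metric space and f_1, …, f_N : X → X contractions. Then there exists a nonempty compact subset B ⊆ X with F(B) ⊆ B, where F(S) = f_1(S) ∪ ⋯ ∪ f_N(S). -/
open Metric Set

/-! A ball around `x₀` is mapped into itself by a contraction `f` of ratio `K` as soon as its
radius `R` satisfies `dist (f x₀) x₀ ≤ (1 - K) R`, since then `K R + (1 - K) R = R`. For finitely
many contractions the sum of the individual minimal radii works for all of them at once, and in a
proper space the resulting closed ball is compact. -/

theorem mapsTo_closedBall_of_dist_le {X : Type*} [PseudoMetricSpace X] {f : X → X} {K R : ℝ}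
    (hK : 0 ≤ K) (hf : ∀ x y, dist (f x) (f y) ≤ K * dist x y) {x₀ : X}
    (h : dist (f x₀) x₀ ≤ (1 - K) * R) :
    MapsTo f (closedBall x₀ R) (closedBall x₀ R) := by
  intro x hx
  rw [mem_closedBall] at hx ⊢
  calc dist (f x) x₀ ≤ dist (f x) (f x₀) + dist (f x₀) x₀ := dist_triangle _ _ _
    _ ≤ K * R + (1 - K) * R := add_le_add ((hf x x₀).trans (by gcongr)) h
    _ = R := by ring

theorem exists_closedBall_mapsTo_of_contractions {X ι : Type*} [PseudoMetricSpace X] [Fintype ι]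
    {f : ι → X → X} {K : ι → ℝ} (hK₀ : ∀ i, 0 ≤ K i) (hK₁ : ∀ i, K i < 1)
    (hf : ∀ i x y, dist (f i x) (f i y) ≤ K i * dist x y) (x₀ : X) :
    ∃ R, 0 ≤ R ∧ ∀ i, MapsTo (f i) (closedBall x₀ R) (closedBall x₀ R) := by
  set r : ι → ℝ := fun i => dist (f i x₀) x₀ / (1 - K i)
  have hr : ∀ i, 0 ≤ r i := fun i => div_nonneg dist_nonneg (sub_nonneg.2 (hK₁ i).le)
  refine ⟨∑ i, r i, Finset.sum_nonneg fun i _ => hr i, fun i => ?_⟩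
  refine mapsTo_closedBall_of_dist_le (hK₀ i) (hf i) ?_
  calc dist (f i x₀) x₀ = (1 - K i) * r i := by
        rw [mul_div_cancel₀ _ (sub_ne_zero.2 (hK₁ i).ne')]
    _ ≤ (1 - K i) * ∑ j, r j := by
        gcongr
        · exact sub_nonneg.2 (hK₁ i).le
        · exact Finset.single_le_sum (fun j _ => hr j) (Finset.mem_univ i)

theorem stmt_7_general {X : Type*} [MetricSpace X] [Nonempty X]
    [ProperSpace X] {N : ℕ}
    (f : Fin N → X → X) (lam : Fin N → ℝ)
    (hlam : ∀ i, lam i ∈ Set.Ioo (0 : ℝ) 1)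
    (hf : ∀ i x y, dist (f i x) (f i y) ≤ lam i * dist x y) :
    ∃ B : Set X, B.Nonempty ∧ IsCompact B ∧ (⋃ i, f i '' B) ⊆ B := by
  obtain ⟨x₀⟩ := ‹Nonempty X›
  obtain ⟨R, hR, hmaps⟩ := exists_closedBall_mapsTo_of_contractions
    (fun i => (hlam i).1.le) (fun i => (hlam i).2) hf x₀
  exact ⟨closedBall x₀ R, nonempty_closedBall.2 hR, isCompact_closedBall x₀ R,
    iUnion_subset fun i => (hmaps i).image_subset⟩

theorem stmt_7 {X : Type*} [MetricSpace X] [Nonempty X] [CompleteSpace X]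
    [ProperSpace X] {N : ℕ} (hN : 0 < N)
    (f : Fin N → X → X) (lam : Fin N → ℝ)
    (hlam : ∀ i, lam i ∈ Set.Ioo (0 : ℝ) 1)
    (hf : ∀ i x y, dist (f i x) (f i y) ≤ lam i * dist x y) :
    ∃ B : Set X, B.Nonempty ∧ IsCompact B ∧ (⋃ i, f i '' B) ⊆ B :=
  stmt_7_general f lam hlam hf
end
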